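/- arXiv:1909.11208 — 2 statements merged into one kernel-verified Lean document; each statement's English description precedes it below -/
import Mathlib

section
/- Let S_n and T_n denote the Chebyshev polynomials characterized by S_n(X + X^{-1}) = (X^{n+1} - X^{-n-1})/(X - X^{-1}) and T_n(X + X^{-1}) = X^n + X^{-n}. Then as an identity of formal power series in t over Q[x], Σ_{k≥1} (T_k(x)/k) t^k = log(1 + Σ_{j≥1} S_j(x) t^j). -/
open PowerSeries

/-- Formal logarithm of a power series (with constant term 1). -/
noncomputable def psLog {A : Type*} [CommRing A] [Algebra ℚ A] (F : PowerSeries A) :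
    PowerSeries A :=
  PowerSeries.mk fun k =>
    ∑ n ∈ Finset.Icc 1 k, ((-1 : ℚ) ^ (n + 1) * (n : ℚ)⁻¹) • (coeff k ((F - 1) ^ n))


section RatFuncAux
open Polynomial

lemma key_mul (i d : ℕ) (h : i ≤ d) :
    (RatFunc.X + RatFunc.X⁻¹ : RatFunc ℚ) ^ i * RatFunc.X ^ d
      = (RatFunc.X ^ 2 + 1) ^ i * RatFunc.X ^ (d - i) := by
  have hx : (RatFunc.X : RatFunc ℚ) ≠ 0 := RatFunc.X_ne_zero
  have h1 : (RatFunc.X + RatFunc.X⁻¹ : RatFunc ℚ) * RatFunc.X = RatFunc.X ^ 2 + 1 := by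
    field_simp
  have h2 : (RatFunc.X : RatFunc ℚ) ^ d = RatFunc.X ^ i * RatFunc.X ^ (d - i) := by
    rw [← pow_add]; congr 1; omega
  rw [h2, ← mul_assoc, ← mul_pow, h1]

lemma aeval_addinv_injective :
    Function.Injective (Polynomial.aeval (RatFunc.X + RatFunc.X⁻¹ : RatFunc ℚ) : ℚ[X] →ₐ[ℚ] RatFunc ℚ) := by
  set y : RatFunc ℚ := RatFunc.X + RatFunc.X⁻¹ with hy
  have h0 : ∀ p : ℚ[X], aeval y p = 0 → p = 0 := by
    intro p hp
    by_contra hpne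
    set d := p.natDegree with hd
    set r : ℚ[X] := ∑ i ∈ Finset.range (d + 1),
      Polynomial.C (p.coeff i) * (Polynomial.X ^ 2 + 1) ^ i * Polynomial.X ^ (d - i) with hr
    have claim1 : algebraMap ℚ[X] (RatFunc ℚ) r = aeval y p * RatFunc.X ^ d := by
      rw [hr, map_sum, aeval_eq_sum_range, Finset.sum_mul]
      refine Finset.sum_congr rfl fun i hi => ?_
      have hid : i ≤ d := Nat.lt_succ_iff.mp (Finset.mem_range.mp hi)
      rw [Algebra.smul_mul_assoc, key_mul i d hid]
      rw [map_mul, map_mul, map_pow, map_pow, map_add, map_pow, map_one, RatFunc.algebraMap_X]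
      rw [Algebra.smul_def, IsScalarTower.algebraMap_apply ℚ ℚ[X] (RatFunc ℚ),
        Polynomial.algebraMap_eq]
      ring
    have hmon : ((Polynomial.X : ℚ[X]) ^ 2 + 1).Monic := by
      apply monic_X_pow_add
      exact Polynomial.degree_one_le.trans_lt (by norm_num)
    have hndeg : ((Polynomial.X : ℚ[X]) ^ 2 + 1).natDegree = 2 := by
      compute_degree!
    have claim2 : r ≠ 0 := by
      have hco : (((Polynomial.X : ℚ[X]) ^ 2 + 1) ^ d).coeff (2 * d) = 1 := by
        have hnd : (((Polynomial.X : ℚ[X]) ^ 2 + 1) ^ d).natDegree = 2 * d := by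
          rw [hmon.natDegree_pow, hndeg]; ring
        have := (hmon.pow (n := d)).coeff_natDegree
        rwa [hnd] at this
      have hlead : r.coeff (2 * d) = p.coeff d := by
        rw [hr, Polynomial.finset_sum_coeff]
        rw [Finset.sum_eq_single d]
        · rw [Nat.sub_self, pow_zero, mul_one, Polynomial.coeff_C_mul, hco, mul_one]
        · intro i hi hne
          apply Polynomial.coeff_eq_zero_of_natDegree_lt
          have hid : i ≤ d := Nat.lt_succ_iff.mp (Finset.mem_range.mp hi)
          have hilt : i < d := lt_of_le_of_ne hid hne
          have e1 : (Polynomial.C (p.coeff i) * (Polynomial.X ^ 2 + 1) ^ i * Polynomial.X ^ (d - i) : ℚ[X]).natDegree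
              ≤ (Polynomial.C (p.coeff i) * (Polynomial.X ^ 2 + 1) ^ i : ℚ[X]).natDegree + (d - i) := by
            have := Polynomial.natDegree_mul_le
              (p := (Polynomial.C (p.coeff i) * (Polynomial.X ^ 2 + 1) ^ i : ℚ[X])) (q := (Polynomial.X ^ (d - i) : ℚ[X]))
            simpa [Polynomial.natDegree_X_pow] using this
          have e2 : (Polynomial.C (p.coeff i) * (Polynomial.X ^ 2 + 1) ^ i : ℚ[X]).natDegree ≤ 2 * i := by
            have h3 := Polynomial.natDegree_mul_le
              (p := (Polynomial.C (p.coeff i) : ℚ[X])) (q := ((Polynomial.X ^ 2 + 1) ^ i : ℚ[X]))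
            have h4 : (((Polynomial.X : ℚ[X]) ^ 2 + 1) ^ i).natDegree = 2 * i := by
              rw [hmon.natDegree_pow, hndeg]; ring
            simpa [Polynomial.natDegree_C, h4] using h3
          omega
        · intro h; exact absurd (Finset.self_mem_range_succ d) h
      intro hr0
      rw [hr0, Polynomial.coeff_zero] at hlead
      exact hpne (Polynomial.leadingCoeff_eq_zero.mp hlead.symm)
    have : algebraMap ℚ[X] (RatFunc ℚ) r = 0 := by rw [claim1, hp, zero_mul]
    exact claim2 (RatFunc.algebraMap_injective ℚ (by simpa using this))
  intro p q hpq
  have hz : aeval y (p - q) = 0 := by rw [map_sub, hpq, sub_self]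
  exact sub_eq_zero.mp (h0 _ hz)


end RatFuncAux

section PsLogLemmas
variable {A : Type*} [CommRing A] [Algebra ℚ A]

lemma constantCoeff_psLog (F : PowerSeries A) : constantCoeff (psLog F) = 0 := by
  have : coeff 0 (psLog F) = 0 := by
    rw [psLog, coeff_mk]
    simp
  simpa using this

lemma coeff_pow_mul_eq_zero {u g : PowerSeries A} (hu : constantCoeff u = 0)
    {k n : ℕ} (h : k < n) : coeff k (u ^ n * g) = 0 := by
  have hX : (X : PowerSeries A) ^ n ∣ u ^ n * g :=
    Dvd.dvd.mul_right (pow_dvd_pow_of_dvd (X_dvd_iff.mpr hu) n) g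
  exact X_pow_dvd_iff.mp hX k h

lemma coeff_pow_eq_zero {u : PowerSeries A} (hu : constantCoeff u = 0)
    {k n : ℕ} (h : k < n) : coeff k (u ^ n) = 0 := by
  simpa using coeff_pow_mul_eq_zero (g := 1) hu h

lemma coeff_psLog_trunc (F : PowerSeries A) (hF : constantCoeff F = 1) (k N : ℕ) (h : k ≤ N) :
    coeff k (psLog F) =
      coeff k (∑ n ∈ Finset.Icc 1 N, (((-1 : ℚ) ^ (n + 1) * (n : ℚ)⁻¹)) • (F - 1) ^ n) := by
  have hu : constantCoeff (F - 1) = 0 := by simp [hF]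
  rw [psLog, coeff_mk, map_sum]
  rw [Finset.sum_subset (Finset.Icc_subset_Icc_right h)]
  · exact Finset.sum_congr rfl fun n _ => (coeff_smul _ _ _).symm
  · intro n hn hn'
    simp only [Finset.mem_Icc] at hn hn'
    have : k < n := by omega
    rw [coeff_pow_eq_zero hu this, smul_zero]

lemma derivative_rat_smul (q : ℚ) (f : PowerSeries A) :
    d⁄dX A (q • f) = q • d⁄dX A f := by
  ext k
  simp [coeff_derivative, coeff_smul, smul_mul_assoc]

lemma telescope (u : PowerSeries A) (N : ℕ) :
    (1 + u) * ∑ n ∈ Finset.Icc 1 N, ((-1 : ℚ) ^ (n + 1)) • u ^ (n - 1)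
      = 1 + ((-1 : ℚ) ^ (N + 1)) • u ^ N := by
  induction N with
  | zero => simp
  | succ N ih =>
    rw [Finset.sum_Icc_succ_top (by omega), mul_add, ih]
    rw [mul_smul_comm]
    have : (1 + u) * u ^ (N + 1 - 1) = u ^ N + u ^ (N + 1) := by
      rw [add_mul, one_mul, Nat.add_sub_cancel, ← pow_succ']
    have h1 : ((-1 : ℚ) ^ (N + 1 + 1)) • u ^ N = -(((-1 : ℚ) ^ (N + 1)) • u ^ N) := by
      rw [pow_succ, mul_comm, neg_one_mul, neg_smul]
    rw [this, smul_add, h1]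
    abel

lemma psLog_key (F : PowerSeries A) (hF : constantCoeff F = 1) :
    F * d⁄dX A (psLog F) = d⁄dX A F := by
  set u := F - 1 with hu_def
  have hu : constantCoeff u = 0 := by simp [hu_def, hF]
  ext k
  set N := k + 1 with hN
  set L : PowerSeries A :=
    ∑ n ∈ Finset.Icc 1 N, ((-1 : ℚ) ^ (n + 1) * (n : ℚ)⁻¹) • u ^ n with hL
  have step1 : coeff k (F * d⁄dX A (psLog F)) = coeff k (F * d⁄dX A L) := by
    rw [coeff_mul, coeff_mul]
    refine Finset.sum_congr rfl fun x hx => ?_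
    have hx2 : x.2 ≤ k := by
      have := Finset.HasAntidiagonal.mem_antidiagonal.mp hx
      omega
    congr 1
    rw [coeff_derivative, coeff_derivative,
      coeff_psLog_trunc F hF (x.2 + 1) N (by omega)]
  have step2 : d⁄dX A L =
      (∑ n ∈ Finset.Icc 1 N, ((-1 : ℚ) ^ (n + 1)) • u ^ (n - 1)) * d⁄dX A u := by
    rw [hL, map_sum, Finset.sum_mul]
    refine Finset.sum_congr rfl fun n hn => ?_
    have hn1 : 1 ≤ n := (Finset.mem_Icc.mp hn).1
    rw [derivative_rat_smul, Derivation.leibniz_pow, smul_eq_mul,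
      ← Nat.cast_smul_eq_nsmul ℚ, smul_smul, smul_mul_assoc]
    congr 2
    rw [mul_assoc, inv_mul_cancel₀ (Nat.cast_ne_zero.mpr (by omega) : (n : ℚ) ≠ 0), mul_one]
  have hFu : F = 1 + u := by rw [hu_def]; ring
  have step3 : F * d⁄dX A L = d⁄dX A u + ((-1 : ℚ) ^ (N + 1)) • (u ^ N * d⁄dX A u) := by
    rw [step2, ← mul_assoc]
    nth_rewrite 1 [hFu]
    rw [telescope u N, add_mul, one_mul, smul_mul_assoc]
  have hDu : d⁄dX A u = d⁄dX A F := by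
    rw [hu_def, map_sub]
    simp
  rw [step1, step3, map_add, coeff_smul,
    coeff_pow_mul_eq_zero hu (by omega : k < N), smul_zero, add_zero, hDu]

end PsLogLemmas



section RatFuncAux2
open Polynomial

noncomputable def fz (m : ℤ) : RatFunc ℚ := RatFunc.X ^ m - RatFunc.X ^ (-m)

lemma fz_neg (m : ℤ) : fz (-m) = -fz m := by
  simp only [fz, neg_neg]; ring

lemma fz_mul (a b : ℤ) :
    fz a * (RatFunc.X ^ b + RatFunc.X ^ (-b)) = fz (a + b) + fz (a - b) := by
  have hx : (RatFunc.X : RatFunc ℚ) ≠ 0 := RatFunc.X_ne_zero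
  simp only [fz, zpow_neg, zpow_add₀ hx, zpow_sub₀ hx, mul_inv]
  field_simp
  ring

lemma hS_fz (i : ℕ) :
    RatFunc.X ^ (i + 1) - (RatFunc.X : RatFunc ℚ)⁻¹ ^ (i + 1) = fz ((i : ℤ) + 1) := by
  have e : ((i : ℤ) + 1) = ((i + 1 : ℕ) : ℤ) := by push_cast; ring
  rw [fz, e, zpow_natCast, zpow_neg, zpow_natCast, inv_pow]

lemma hT_fz (n : ℕ) :
    RatFunc.X ^ n + (RatFunc.X : RatFunc ℚ)⁻¹ ^ n
      = RatFunc.X ^ (n : ℤ) + RatFunc.X ^ (-(n : ℤ)) := by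
  rw [zpow_natCast, zpow_neg, zpow_natCast, inv_pow]

lemma w_ne_zero : (RatFunc.X - RatFunc.X⁻¹ : RatFunc ℚ) ≠ 0 := by
  have hx : (RatFunc.X : RatFunc ℚ) ≠ 0 := RatFunc.X_ne_zero
  rw [sub_ne_zero]
  intro h
  have h2 : (algebraMap ℚ[X] (RatFunc ℚ)) (Polynomial.X * Polynomial.X)
      = algebraMap ℚ[X] (RatFunc ℚ) 1 := by
    rw [map_mul, map_one, RatFunc.algebraMap_X]
    nth_rewrite 2 [h]
    exact mul_inv_cancel₀ hx
  have h3 := RatFunc.algebraMap_injective ℚ h2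
  have h4 := congrArg (Polynomial.eval 0) h3
  simp at h4

lemma poly_key (S T : ℕ → Polynomial ℚ)
    (hS : ∀ n, Polynomial.aeval (RatFunc.X + RatFunc.X⁻¹ : RatFunc ℚ) (S n) *
      (RatFunc.X - RatFunc.X⁻¹) = RatFunc.X ^ (n + 1) - (RatFunc.X)⁻¹ ^ (n + 1))
    (hT : ∀ n, Polynomial.aeval (RatFunc.X + RatFunc.X⁻¹ : RatFunc ℚ) (T n) =
      RatFunc.X ^ n + (RatFunc.X)⁻¹ ^ n) (k : ℕ) :
    ∑ ij ∈ Finset.HasAntidiagonal.antidiagonal k, (if ij.1 = 0 then 1 else S ij.1) * T (ij.2 + 1)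
      = S (k + 1) * ((k : Polynomial ℚ) + 1) := by
  apply aeval_addinv_injective
  set y : RatFunc ℚ := RatFunc.X + RatFunc.X⁻¹ with hy
  set w : RatFunc ℚ := RatFunc.X - RatFunc.X⁻¹ with hw
  apply mul_right_cancel₀ w_ne_zero
  have hzero : ∑ i ∈ Finset.range (k + 1), fz (2 * (i : ℤ) - k) = 0 := by
    have h := Finset.sum_range_reflect (fun i => fz (2 * (i : ℤ) - k)) (k + 1)
    have hcongr : ∀ j ∈ Finset.range (k + 1),
        fz (2 * ((k + 1 - 1 - j : ℕ) : ℤ) - k) = -fz (2 * (j : ℤ) - k) := by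
      intro j hj
      have hjk : j ≤ k := Nat.lt_succ_iff.mp (Finset.mem_range.mp hj)
      have e : (2 * ((k + 1 - 1 - j : ℕ) : ℤ) - k) = -(2 * (j : ℤ) - k) := by omega
      rw [e, fz_neg]
    rw [Finset.sum_congr rfl hcongr] at h
    rw [Finset.sum_neg_distrib] at h
    have h2 : (∑ i ∈ Finset.range (k + 1), fz (2 * (i : ℤ) - k))
        + ∑ i ∈ Finset.range (k + 1), fz (2 * (i : ℤ) - k) = 0 := by
      nth_rewrite 1 [← h]; exact neg_add_cancel _
    have h3 : (2 : RatFunc ℚ) * ∑ i ∈ Finset.range (k + 1), fz (2 * (i : ℤ) - k) = 0 := by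
      rw [two_mul]; exact h2
    have h20 : (2 : RatFunc ℚ) ≠ 0 := by
      intro h0
      have h4 := RatFunc.algebraMap_injective ℚ
        (show (algebraMap ℚ[X] (RatFunc ℚ)) 2 = (algebraMap ℚ[X] (RatFunc ℚ)) 0 by
          rw [map_ofNat, map_zero, h0])
      norm_num at h4
    exact (mul_eq_zero.mp h3).resolve_left h20
  rw [map_sum, Finset.sum_mul, Finset.Nat.sum_antidiagonal_eq_sum_range_succ_mk]
  have hterm : ∀ i ∈ Finset.range (k + 1),
      Polynomial.aeval y ((if (i, k - i).1 = 0 then 1 else S (i, k - i).1) *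
        T ((i, k - i).2 + 1)) * w
        = fz ((k : ℤ) + 2) + fz (2 * (i : ℤ) - k) := by
    intro i hi
    have hik : i ≤ k := Nat.lt_succ_iff.mp (Finset.mem_range.mp hi)
    rw [map_mul, mul_right_comm]
    have h1 : (Polynomial.aeval y (if (i, k - i).1 = 0 then 1 else S (i, k - i).1)) * w
        = fz ((i : ℤ) + 1) := by
      simp only []
      rw [apply_ite (Polynomial.aeval y), map_one]
      split_ifs with h
      · subst h
        rw [one_mul, ← hS_fz 0, pow_one, pow_one]
      · rw [hS i, hS_fz i]
    have h2 : Polynomial.aeval y (T ((i, k - i).2 + 1))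
        = RatFunc.X ^ ((k : ℤ) - i + 1) + RatFunc.X ^ (-((k : ℤ) - i + 1)) := by
      simp only []
      rw [hT, hT_fz]
      have e : ((k - i + 1 : ℕ) : ℤ) = (k : ℤ) - i + 1 := by omega
      rw [e]
    rw [h1, h2, fz_mul]
    have e1 : (i : ℤ) + 1 + ((k : ℤ) - i + 1) = (k : ℤ) + 2 := by ring
    have e2 : (i : ℤ) + 1 - ((k : ℤ) - i + 1) = 2 * (i : ℤ) - k := by ring
    rw [e1, e2]
  rw [Finset.sum_congr rfl hterm, Finset.sum_add_distrib, Finset.sum_const,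
    Finset.card_range, hzero, add_zero]
  rw [map_mul, mul_right_comm, hS (k + 1), hS_fz (k + 1)]
  have e3 : (((k + 1 : ℕ)) : ℤ) + 1 = (k : ℤ) + 2 := by omega
  rw [e3, nsmul_eq_mul]
  have e4 : Polynomial.aeval y ((k : Polynomial ℚ) + 1) = ((k : RatFunc ℚ) + 1) := by
    rw [map_add, map_natCast, map_one]
  rw [e4]
  push_cast
  ring


end RatFuncAux2

/-- For the rescaled Chebyshev polynomials `S_n, T_n ∈ ℚ[x]` characterized by
`S_n(X+X⁻¹)(X-X⁻¹) = X^{n+1} - X^{-(n+1)}` and `T_n(X+X⁻¹) = X^n + X^{-n}`,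
we have `Σ_{k≥1} (T_k(x)/k) t^k = log(1 + Σ_{j≥1} S_j(x) t^j)`. -/
theorem chebyshev_log_identity (S T : ℕ → Polynomial ℚ)
    (hS : ∀ n, Polynomial.aeval (RatFunc.X + RatFunc.X⁻¹ : RatFunc ℚ) (S n) *
      (RatFunc.X - RatFunc.X⁻¹) = RatFunc.X ^ (n + 1) - (RatFunc.X)⁻¹ ^ (n + 1))
    (hT : ∀ n, Polynomial.aeval (RatFunc.X + RatFunc.X⁻¹ : RatFunc ℚ) (T n) =
      RatFunc.X ^ n + (RatFunc.X)⁻¹ ^ n) :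
    (PowerSeries.mk fun k => if k = 0 then 0 else ((k : ℚ)⁻¹) • T k) =
      psLog (1 + PowerSeries.mk fun j => if j = 0 then 0 else S j) := by
  classical
  set F : PowerSeries (Polynomial ℚ) :=
    1 + PowerSeries.mk (fun j => if j = 0 then 0 else S j) with hF_def
  have hF : constantCoeff F = 1 := by
    rw [hF_def, map_add, map_one]
    have : constantCoeff
        (PowerSeries.mk (fun j => if j = 0 then (0 : Polynomial ℚ) else S j)) = 0 := by
      have h0 := coeff_mk 0 (fun j => if j = 0 then (0 : Polynomial ℚ) else S j)
      simpa using h0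
    rw [this, add_zero]
  set P : PowerSeries (Polynomial ℚ) :=
    PowerSeries.mk (fun k => if k = 0 then 0 else ((k : ℚ)⁻¹) • T k) with hP_def
  have hcF : ∀ i, coeff i F = if i = 0 then 1 else S i := by
    intro i
    rw [hF_def, map_add, coeff_mk, PowerSeries.coeff_one]
    split_ifs <;> simp
  have hcDP : ∀ j, coeff j (d⁄dX (Polynomial ℚ) P) = T (j + 1) := by
    intro j
    rw [coeff_derivative, hP_def, coeff_mk, if_neg (Nat.succ_ne_zero j)]
    rw [smul_mul_assoc]
    have hC : ((j : Polynomial ℚ) + 1) = Polynomial.C ((j : ℚ) + 1) := by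
      rw [map_add, map_one, map_natCast]
    rw [hC, mul_comm, ← Polynomial.smul_eq_C_mul, smul_smul]
    have : ((j + 1 : ℕ) : ℚ)⁻¹ * ((j : ℚ) + 1) = 1 := by
      rw [inv_mul_eq_one₀ (by positivity)]
      push_cast
      ring
    rw [this, one_smul]
  have hunit : IsUnit F := isUnit_iff_constantCoeff.mpr (by rw [hF]; exact isUnit_one)
  have key2 : F * d⁄dX (Polynomial ℚ) P = d⁄dX (Polynomial ℚ) F := by
    ext k
    rw [coeff_mul, coeff_derivative]
    have hterm : ∀ x ∈ Finset.HasAntidiagonal.antidiagonal k,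
        coeff x.1 F * coeff x.2 (d⁄dX (Polynomial ℚ) P)
          = (if x.1 = 0 then 1 else S x.1) * T (x.2 + 1) := by
      intro x hx
      rw [hcF, hcDP]
    rw [Finset.sum_congr rfl hterm, poly_key S T hS hT k, hcF,
      if_neg (Nat.succ_ne_zero k)]
  exact PowerSeries.derivative.ext
    (hunit.mul_left_cancel (key2.trans (psLog_key F hF).symm))
    (by rw [constantCoeff_psLog, hP_def]
        have h0 := coeff_mk 0 (fun k => if k = 0 then (0 : Polynomial ℚ) else ((k : ℚ)⁻¹) • T k)
        simpa using h0)
end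

section
/- Let {n} := s^n - s^{-n} in Q(s). For vectors a, b, y ∈ Z^2 with bilinear determinant form d(·,·), the quantum-integer identity {d(y,a)}{d(y+a,b)} + {d(b,y)}{d(b+y,a)} = -{d(a,b)}{d(a+b,y)} holds. -/
/-!
With `A = d(y,a)`, `B = d(y,b)`, `C = d(a,b)`, bilinearity and antisymmetry of `d` turn the claim
into the three-term relation `{A}{B+C} - {B}{A-C} = {C}{A+B}`. Writing `⟨n⟩ = s^n + s^{-n}`, each
product `{m}{n}` equals `⟨m+n⟩ - ⟨m-n⟩`, and after this expansion the relation cancels because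
`⟨·⟩` is even.
-/

section QuantumInt

variable {K : Type*} [Field K]

def quantumInt (s : K) (n : ℤ) : K := s ^ n - s ^ (-n)

def quantumCosh (s : K) (n : ℤ) : K := s ^ n + s ^ (-n)

theorem quantumInt_neg (s : K) (n : ℤ) : quantumInt s (-n) = -quantumInt s n := by
  simp only [quantumInt, neg_neg, neg_sub]

theorem quantumCosh_neg (s : K) (n : ℤ) : quantumCosh s (-n) = quantumCosh s n := by
  simp only [quantumCosh, neg_neg, add_comm]

theorem quantumInt_mul_quantumInt {s : K} (hs : s ≠ 0) (m n : ℤ) :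
    quantumInt s m * quantumInt s n = quantumCosh s (m + n) - quantumCosh s (m - n) := by
  simp only [quantumInt, quantumCosh, sub_mul, mul_sub, ← zpow_add₀ hs]
  ring_nf

theorem quantumInt_three_term {s : K} (hs : s ≠ 0) (A B C : ℤ) :
    quantumInt s A * quantumInt s (B + C) - quantumInt s B * quantumInt s (A - C) =
      quantumInt s C * quantumInt s (A + B) := by
  simp only [quantumInt_mul_quantumInt hs]
  have h₁ : quantumCosh s (A - (B + C)) = quantumCosh s (B - (A - C)) := by
    rw [← quantumCosh_neg]; ring_nf
  have h₂ : quantumCosh s (B + (A - C)) = quantumCosh s (C - (A + B)) := by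
    rw [← quantumCosh_neg]; ring_nf
  rw [h₁, h₂]
  ring_nf

end QuantumInt

section Det2

def det2 (P Q : ℤ × ℤ) : ℤ := P.1 * Q.2 - P.2 * Q.1

theorem det2_add_left (P P' Q : ℤ × ℤ) : det2 (P + P') Q = det2 P Q + det2 P' Q := by
  simp only [det2, Prod.fst_add, Prod.snd_add]; ring

theorem det2_swap (P Q : ℤ × ℤ) : det2 Q P = -det2 P Q := by
  simp only [det2]; ring

end Det2

/-- The quantum-integer identity
`{d(y,a)}{d(y+a,b)} + {d(b,y)}{d(b+y,a)} = -{d(a,b)}{d(a+b,y)}` in `ℚ(s)`. -/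
theorem quantum_det_identity (a b y : ℤ × ℤ) :
    let s : RatFunc ℚ := RatFunc.X
    let d : ℤ × ℤ → ℤ × ℤ → ℤ := fun P Q => P.1 * Q.2 - P.2 * Q.1
    let qint : ℤ → RatFunc ℚ := fun n => s ^ n - s ^ (-n)
    qint (d y a) * qint (d (y + a) b) + qint (d b y) * qint (d (b + y) a) =
      -(qint (d a b) * qint (d (a + b) y)) := by
  show quantumInt RatFunc.X (det2 y a) * quantumInt RatFunc.X (det2 (y + a) b) +
      quantumInt RatFunc.X (det2 b y) * quantumInt RatFunc.X (det2 (b + y) a) =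
    -(quantumInt RatFunc.X (det2 a b) * quantumInt RatFunc.X (det2 (a + b) y))
  have hBC : det2 (y + a) b = det2 y b + det2 a b := det2_add_left y a b
  have hAC : det2 (b + y) a = det2 y a - det2 a b := by
    rw [det2_add_left, det2_swap a b]; ring
  have hAB : det2 (a + b) y = -(det2 y a + det2 y b) := by
    rw [det2_add_left, det2_swap a y, det2_swap b y]; ring
  rw [hBC, hAC, hAB, det2_swap y b, quantumInt_neg, quantumInt_neg]
  linear_combination
    quantumInt_three_term (RatFunc.X_ne_zero (K := ℚ)) (det2 y a) (det2 y b) (det2 a b)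
end
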